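/- arXiv:2410.19350 — 2 statements merged into one kernel-verified Lean document; each statement's English description precedes it below -/
import Mathlib

section
/- Let s ≥ 3 and let S be an s×s latently-skew-symmetric real matrix. Let j₁, j₂ ∈ {1, …, s−1} be two distinct indices such that S_{j₁,j₁} ≠ 0 and the (j₂,j₂) entry of GJ⁺_{j₁}(S) is nonzero. Then the matrix GJ⁺_{j₂}(GJ⁺_{j₁}(S)), obtained by applying complementary Gauss-Jordan-plus pivoting in column j₁ followed by complementary Gauss-Jordan-plus pivoting in column j₂, is latently-skew-symmetric. -/
/-- The last index of `Fin s`, given `0 < s`. -/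
def lastIdx (s : ℕ) (hs : 0 < s) : Fin s := ⟨s - 1, Nat.sub_lt hs Nat.one_pos⟩

/-- An `s × s` real matrix `S` is latently-skew-symmetric if its bottom-right entry is `0`
and there exist reals `β i` such that adding `β i` times the last row of `S` to row `i`,
for each `i`, yields a skew-symmetric matrix. -/
def IsLSkewSym {s : ℕ} (hs : 0 < s) (S : Matrix (Fin s) (Fin s) ℝ) : Prop :=
  S (lastIdx s hs) (lastIdx s hs) = 0 ∧
    ∃ β : Fin s → ℝ,
      ∀ i j, S i j + β i * S (lastIdx s hs) j = -(S j i + β j * S (lastIdx s hs) i)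

/-- Complementary Gauss-Jordan-plus pivoting of `S` in column `j` (pivot at `(j,j)`). -/
noncomputable def GJplus {s : ℕ} (S : Matrix (Fin s) (Fin s) ℝ) (j : Fin s) : Matrix (Fin s) (Fin s) ℝ :=
  Matrix.of fun i k =>
    if i = j then (if k = j then 1 / S j j else S j k / S j j)
    else (if k = j then -(S i j) / S j j else S i k - S i j * S j k / S j j)

/-!
`S` is latently skew-symmetric with multipliers `β` exactly when the quadratic form
`x ⬝ᵥ S *ᵥ x + (x ⬝ᵥ β) * (S *ᵥ x) n` vanishes identically (`n` the last index).
Pivoting is an exchange: `S *ᵥ x = y` with `x j`, `y j` replaced by `-y j`, `-x j` is the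
relation `GJ⁺_j(S) *ᵥ w = v` between the modified vectors. The products `x i * y i` are unchanged,
and `x ⬝ᵥ β` becomes a linear function of `w`, so each pivot off the last index preserves the
vanishing quadratic form with new multipliers. The corner entry `S n n = 0` is not preserved by
a single pivot, but after two it is again zero by a direct computation with the latent skew
relations.
-/

open Matrix

section Update

variable {ι K : Type*} [DecidableEq ι] [CommRing K]

lemma Function.update_eq_add_single (w : ι → K) (j : ι) (a : K) :
    Function.update w j a = w + Pi.single j (a - w j) := by
  ext k
  by_cases hk : k = j
  · subst hk; simp
  · simp [hk]

variable [Fintype ι]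

lemma dotProduct_update (v w : ι → K) (j : ι) (a : K) :
    v ⬝ᵥ Function.update w j a = v ⬝ᵥ w + v j * (a - w j) := by
  rw [Function.update_eq_add_single, dotProduct_add, dotProduct_single]

lemma update_dotProduct (v w : ι → K) (j : ι) (a : K) :
    Function.update v j a ⬝ᵥ w = v ⬝ᵥ w + (a - v j) * w j := by
  rw [dotProduct_comm, dotProduct_update, dotProduct_comm, mul_comm]

end Update

def IsLatentSkewWith {ι K : Type*} [Ring K] (n : ι) (β : ι → K) (S : Matrix ι ι K) : Prop :=
  ∀ i j, S i j + β i * S n j = -(S j i + β j * S n i)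

section QuadForm

variable {ι K : Type*} [Fintype ι] [DecidableEq ι] [Field K] [CharZero K]

lemma transpose_eq_neg_iff_forall_dotProduct_mulVec_self (T : Matrix ι ι K) :
    Tᵀ = -T ↔ ∀ x, x ⬝ᵥ T *ᵥ x = 0 := by
  constructor
  · intro hT x
    have : x ⬝ᵥ T *ᵥ x = -(x ⬝ᵥ T *ᵥ x) := by
      conv_lhs => rw [dotProduct_mulVec, ← mulVec_transpose, hT, neg_mulVec, dotProduct_comm]
      rw [dotProduct_neg]
    exact self_eq_neg.mp this
  · intro hT
    ext i k
    have hii := hT (Pi.single i 1)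
    have hkk := hT (Pi.single k 1)
    have hik := hT (Pi.single i 1 + Pi.single k 1)
    simp only [mulVec_add, dotProduct_add, add_dotProduct, single_dotProduct, mulVec_single_one,
      col_apply, one_mul] at hii hkk hik
    simp only [transpose_apply, Matrix.neg_apply]
    linear_combination hik - hii - hkk

lemma isLatentSkewWith_iff (n : ι) (β : ι → K) (S : Matrix ι ι K) :
    IsLatentSkewWith n β S ↔ ∀ x, x ⬝ᵥ S *ᵥ x + (x ⬝ᵥ β) * (S *ᵥ x) n = 0 := by
  have hT : ∀ x, x ⬝ᵥ (S + vecMulVec β (S n)) *ᵥ x = x ⬝ᵥ S *ᵥ x + (x ⬝ᵥ β) * (S *ᵥ x) n := by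
    intro x
    rw [add_mulVec, dotProduct_add, vecMulVec_mulVec]
    simp [mulVec, dotProduct_smul, mul_comm]
  simp_rw [← hT, ← transpose_eq_neg_iff_forall_dotProduct_mulVec_self, ← Matrix.ext_iff,
    IsLatentSkewWith]
  simp only [transpose_apply, Matrix.neg_apply, Matrix.add_apply, vecMulVec_apply]
  exact ⟨fun h i j => h j i, fun h i j => h j i⟩

end QuadForm

section GJplus

variable {s : ℕ} (S : Matrix (Fin s) (Fin s) ℝ) {j : Fin s}

lemma gjPlus_mulVec_apply_self (hj : S j j ≠ 0) (w : Fin s → ℝ) :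
    (GJplus S j *ᵥ w) j = (S j ⬝ᵥ w + w j) / S j j - w j := by
  have hrow : GJplus S j j = Function.update ((S j j)⁻¹ • S j) j (S j j)⁻¹ := by
    ext k
    by_cases hk : k = j
    · subst hk; simp [GJplus]
    · simp [GJplus, hk, div_eq_inv_mul]
  rw [mulVec, hrow, update_dotProduct, smul_dotProduct]
  simp only [Pi.smul_apply, smul_eq_mul]
  field_simp
  ring

lemma gjPlus_mulVec_apply_of_ne {i : Fin s} (hi : i ≠ j) (hj : S j j ≠ 0) (w : Fin s → ℝ) :
    (GJplus S j *ᵥ w) i = S i ⬝ᵥ w - S i j * ((S j ⬝ᵥ w + w j) / S j j) := by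
  have hrow : GJplus S j i = Function.update (S i - (S i j / S j j) • S j) j (-S i j / S j j) := by
    ext k
    by_cases hk : k = j
    · subst hk; simp [GJplus, hi]
    · simp [GJplus, hk, hi]
      ring
  rw [mulVec, hrow, update_dotProduct, sub_dotProduct, smul_dotProduct]
  simp only [Pi.sub_apply, Pi.smul_apply, smul_eq_mul]
  field_simp
  ring

lemma mulVec_update_gjPlus (hj : S j j ≠ 0) (w : Fin s → ℝ) :
    S *ᵥ Function.update w j (-(GJplus S j *ᵥ w) j) =
      Function.update (GJplus S j *ᵥ w) j (-w j) := by
  ext i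
  rw [mulVec, dotProduct_update, gjPlus_mulVec_apply_self S hj]
  by_cases hi : i = j
  · subst hi
    simp only [Function.update_self]
    field_simp
    ring
  · rw [Function.update_of_ne hi, gjPlus_mulVec_apply_of_ne S hi hj]
    ring

end GJplus

lemma IsLatentSkewWith.gjPlus {s : ℕ} {S : Matrix (Fin s) (Fin s) ℝ} {n j : Fin s} {β : Fin s → ℝ}
    (hS : IsLatentSkewWith n β S) (hjn : j ≠ n) (hj : S j j ≠ 0) :
    IsLatentSkewWith n (β - β j • (Pi.single j 1 + GJplus S j j)) (GJplus S j) := by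
  rw [isLatentSkewWith_iff] at hS ⊢
  intro w
  have key := hS (Function.update w j (-(GJplus S j *ᵥ w) j))
  rw [mulVec_update_gjPlus S hj, Function.update_of_ne hjn.symm, update_dotProduct,
    dotProduct_update, update_dotProduct] at key
  have hrow : w ⬝ᵥ GJplus S j j = (GJplus S j *ᵥ w) j := dotProduct_comm _ _
  rw [dotProduct_sub, dotProduct_smul, dotProduct_add, dotProduct_single, hrow]
  simp only [Function.update_self, smul_eq_mul] at key ⊢
  linear_combination key

lemma IsLatentSkewWith.gjPlus_gjPlus_apply_self_eq_zero {s : ℕ} {S : Matrix (Fin s) (Fin s) ℝ}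
    {n j₁ j₂ : Fin s} {β : Fin s → ℝ} (hS : IsLatentSkewWith n β S) (h0 : S n n = 0)
    (hj₁ : j₁ ≠ n) (hj₂ : j₂ ≠ n) (hne : j₁ ≠ j₂) (hpiv₁ : S j₁ j₁ ≠ 0)
    (hpiv₂ : GJplus S j₁ j₂ j₂ ≠ 0) :
    GJplus (GJplus S j₁) j₂ n n = 0 := by
  set M := GJplus S j₁
  have hM : GJplus M j₂ n n = (M n n * M j₂ j₂ - M n j₂ * M j₂ n) / M j₂ j₂ := by
    simp only [GJplus, of_apply, if_neg hj₂.symm]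
    field_simp
  have h11 : S j₁ j₁ = -(β j₁ * S n j₁) := by linear_combination hS j₁ j₁ / 2
  have h22 : S j₂ j₂ = -(β j₂ * S n j₂) := by linear_combination hS j₂ j₂ / 2
  have h1n : S j₁ n = -(S n j₁) - β n * S n j₁ := by linear_combination hS j₁ n - β j₁ * h0
  have h2n : S j₂ n = -(S n j₂) - β n * S n j₂ := by linear_combination hS j₂ n - β j₂ * h0
  have h21 : S j₂ j₁ = -(S j₁ j₂) - β j₁ * S n j₂ - β j₂ * S n j₁ := by
    linear_combination hS j₁ j₂
  have hdet : M n n * M j₂ j₂ = M n j₂ * M j₂ n := by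
    simp only [M, GJplus, of_apply, if_neg hj₁.symm, if_neg hne.symm, h0]
    field_simp
    rw [h11, h22, h1n, h2n, h21]
    ring
  rw [hM, hdet, sub_self, zero_div]

/-- For an `s × s` latently-skew-symmetric matrix `S` with `s ≥ 3`,
applying complementary GJ⁺ pivoting in column `j₁` and then in column `j₂`
(two distinct non-last columns with nonzero pivots) yields a latently-skew-symmetric matrix. -/
theorem stmt0 (s : ℕ) (hs : 3 ≤ s) (S : Matrix (Fin s) (Fin s) ℝ)
    (hS : IsLSkewSym (by omega) S)
    (j₁ j₂ : Fin s) (hj₁ : j₁ ≠ lastIdx s (by omega)) (hj₂ : j₂ ≠ lastIdx s (by omega))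
    (hne : j₁ ≠ j₂) (hpiv₁ : S j₁ j₁ ≠ 0) (hpiv₂ : GJplus S j₁ j₂ j₂ ≠ 0) :
    IsLSkewSym (by omega) (GJplus (GJplus S j₁) j₂) := by
  obtain ⟨h0, β, hβ : IsLatentSkewWith _ β S⟩ := hS
  exact ⟨hβ.gjPlus_gjPlus_apply_self_eq_zero h0 hj₁ hj₂ hne hpiv₁ hpiv₂, _,
    (hβ.gjPlus hj₁ hpiv₁).gjPlus hj₂ hpiv₂⟩
end

section
/- Let s ≥ 2 and let S be an s×s latently-skew-symmetric real matrix. Then for all indices i, i' ∈ {1, …, s−1}, one has S_{s,i} · S_{i',s} = S_{s,i'} · S_{i,s}. In particular, for all i, i' ∈ {1, …, s−1} with S_{i,s} ≠ 0 and S_{i',s} ≠ 0, the ratios coincide: S_{s,i}/S_{i,s} = S_{s,i'}/S_{i',s} (the common value is the last-row/last-column ratio of S). -/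
namespace Matrix

variable {n R : Type*} [CommRing R] {S : Matrix n n R} {l : n}

theorem col_eq_neg_one_add_mul_row_of_skew_add_row (β : n → R) (hl : S l l = 0)
    (hskew : ∀ i j, S i j + β i * S l j = -(S j i + β j * S l i)) (i : n) :
    S i l = -(1 + β l) * S l i := by
  linear_combination hskew i l - β i * hl

theorem row_mul_col_comm_of_col_eq_mul_row {c : R} (hcol : ∀ i, S i l = c * S l i) (i i' : n) :
    S l i * S i' l = S l i' * S i l := by
  rw [hcol i, hcol i']
  ring

end Matrix

theorem IsLSkewSym.exists_col_last_eq_mul_row_last {s : ℕ} {hs : 0 < s}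
    {S : Matrix (Fin s) (Fin s) ℝ} (hS : IsLSkewSym hs S) :
    ∃ c : ℝ, ∀ i, S i (lastIdx s hs) = c * S (lastIdx s hs) i := by
  obtain ⟨hlast, β, hskew⟩ := hS
  exact ⟨_, Matrix.col_eq_neg_one_add_mul_row_of_skew_add_row β hlast hskew⟩

/-- In an `s × s` latently-skew-symmetric matrix (`s ≥ 2`), the
cross-products of last-row and last-column entries agree: `S_{s,i}·S_{i',s} = S_{s,i'}·S_{i,s}`
for all non-last indices `i, i'`; in particular the last-row/last-column ratios
`S_{s,i}/S_{i,s}` coincide whenever the denominators are nonzero. -/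
theorem stmt2 (s : ℕ) (hs : 2 ≤ s) (S : Matrix (Fin s) (Fin s) ℝ)
    (hS : IsLSkewSym (by omega) S) :
    let last : Fin s := lastIdx s (by omega)
    (∀ i i' : Fin s, i ≠ last → i' ≠ last →
        S last i * S i' last = S last i' * S i last) ∧
      (∀ i i' : Fin s, i ≠ last → i' ≠ last → S i last ≠ 0 → S i' last ≠ 0 →
        S last i / S i last = S last i' / S i' last) := by
  intro last
  obtain ⟨c, hcol⟩ := hS.exists_col_last_eq_mul_row_last
  have cross := Matrix.row_mul_col_comm_of_col_eq_mul_row hcol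
  refine ⟨fun i i' _ _ => cross i i', fun i i' _ _ hi hi' => ?_⟩
  exact (div_eq_div_iff hi hi').2 (cross i i')
end
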